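/- Let α₁, β₁, α₂, β₂ be elements of a commutative ring. Set P₁(T₁) = (1 − α₁T₁)(1 − β₁T₁), P₂(T₂) = (1 − α₂T₂)(1 − β₂T₂), and P(T) = (1 − α₁α₂T)(1 − α₁β₂T)(1 − β₁α₂T)(1 − β₁β₂T). Then there exist polynomials a₂(T₁,T₂) and b₁(T₁,T₂) in two variables such that P(T₁T₂) = a₂(T₁,T₂)·P₁(T₁) + b₁(T₁,T₂)·P₂(T₂), where every monomial T₁^x T₂^y occurring in a₂ satisfies x ≤ y and every monomial T₁^x T₂^y occurring in b₁ satisfies x > y. -/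
import Mathlib


open MvPolynomial

/-- A monomial term `C c * X 0 ^ x * X 1 ^ y` has support contained in the single
exponent vector, so any exponent vector in its support has entries `x` and `y`. -/
lemma supp_term {A : Type*} [CommRing A] {c : A} {x y : ℕ} {m : Fin 2 →₀ ℕ}
    (hm : m ∈ (C c * X 0 ^ x * X 1 ^ y : MvPolynomial (Fin 2) A).support) :
    m 0 = x ∧ m 1 = y := by
  have h : (C c * X 0 ^ x * X 1 ^ y : MvPolynomial (Fin 2) A)
      = monomial (Finsupp.single 0 x + Finsupp.single 1 y) c := by
    rw [C_mul_X_pow_eq_monomial, X_pow_eq_monomial, monomial_mul, mul_one]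
  rw [h] at hm
  have := MvPolynomial.support_monomial_subset hm
  have hms : m = Finsupp.single 0 x + Finsupp.single 1 y := by
    simpa using this
  subst hms
  constructor <;> simp [Finsupp.single_apply]

/-- Decomposition `P(T₁T₂) = a₂(T₁,T₂) P₁(T₁) + b₁(T₁,T₂) P₂(T₂)` where all monomials
`T₁^x T₂^y` of `a₂` satisfy `x ≤ y` and all monomials of `b₁` satisfy `x > y`. -/
theorem stmt1 {A : Type*} [CommRing A] (α₁ β₁ α₂ β₂ : A) :
    ∃ a₂ b₁ : MvPolynomial (Fin 2) A,
      ((1 - C (α₁ * α₂) * (X 0 * X 1)) * (1 - C (α₁ * β₂) * (X 0 * X 1)) *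
        (1 - C (β₁ * α₂) * (X 0 * X 1)) * (1 - C (β₁ * β₂) * (X 0 * X 1))
        = a₂ * ((1 - C α₁ * X 0) * (1 - C β₁ * X 0))
          + b₁ * ((1 - C α₂ * X 1) * (1 - C β₂ * X 1))) ∧
      (∀ m ∈ a₂.support, m 0 ≤ m 1) ∧
      (∀ m ∈ b₁.support, m 1 < m 0) := by
  refine ⟨C (1 : A) * X 0 ^ 0 * X 1 ^ 0
      + C (-((α₁ + β₁) * (α₂ * β₂))) * X 0 ^ 1 * X 1 ^ 2
      + C (-(α₁ * β₁ * (α₂ * β₂))) * X 0 ^ 2 * X 1 ^ 2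
      + C (α₁ * β₁ * (α₂ * β₂) * (α₂ + β₂)) * X 0 ^ 2 * X 1 ^ 3,
    C (α₁ + β₁) * X 0 ^ 1 * X 1 ^ 0
      + C (-(α₁ * β₁)) * X 0 ^ 2 * X 1 ^ 0
      + C (-(α₁ * β₁ * (α₂ + β₂))) * X 0 ^ 2 * X 1 ^ 1
      + C (α₁ ^ 2 * β₁ ^ 2 * (α₂ * β₂)) * X 0 ^ 4 * X 1 ^ 2, ?_, ?_, ?_⟩
  · simp only [map_mul, map_add, map_neg, map_pow, map_one]
    ring
  · intro m hm
    rcases Finset.mem_union.mp (MvPolynomial.support_add hm) with hm | hm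
    · rcases Finset.mem_union.mp (MvPolynomial.support_add hm) with hm | hm
      · rcases Finset.mem_union.mp (MvPolynomial.support_add hm) with hm | hm
        · obtain ⟨h0, h1⟩ := supp_term hm; omega
        · obtain ⟨h0, h1⟩ := supp_term hm; omega
      · obtain ⟨h0, h1⟩ := supp_term hm; omega
    · obtain ⟨h0, h1⟩ := supp_term hm; omega
  · intro m hm
    rcases Finset.mem_union.mp (MvPolynomial.support_add hm) with hm | hm
    · rcases Finset.mem_union.mp (MvPolynomial.support_add hm) with hm | hm
      · rcases Finset.mem_union.mp (MvPolynomial.support_add hm) with hm | hm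
        · obtain ⟨h0, h1⟩ := supp_term hm; omega
        · obtain ⟨h0, h1⟩ := supp_term hm; omega
      · obtain ⟨h0, h1⟩ := supp_term hm; omega
    · obtain ⟨h0, h1⟩ := supp_term hm; omega
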